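/- The volume of the region C_λ = {(x,y,z) ∈ ℝ³ : x²+y²+z² < λ, x > 1, y > 1, z > 1} is strictly greater than (π/6)λ^{3/2} − (3π/4)λ + 3√(λ−2) − 1, for every λ ≥ 3. -/

import Mathlib

/-!
Inside the positive octant of the ball `x² + y² + z² < λ`, the corner region is what remains
after removing the three slabs `x ≤ 1`, `y ≤ 1`, `z ≤ 1`. Slicing into quarter discs, the octant
has volume `π/6 · λ^{3/2}` and each slab `π/4 · λ - π/12`. By inclusion–exclusion and the cyclic
symmetry of the coordinates, the corner region has volume
`π/6 · λ^{3/2} - 3 (π/4 · λ - π/12) + 3 |slab ∩ slab| - |slab ∩ slab ∩ slab|`; each pairwise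
intersection contains the box `(0,1] × (0,1] × (0, √(λ-2))` and the triple one lies in the unit
cube. The surplus `π/4` makes the bound strict.
-/

open Real MeasureTheory Set intervalIntegral

theorem integral_sqrt_one_sub_sq_zero_one : ∫ x in (0 : ℝ)..1, √(1 - x ^ 2) = π / 4 := by
  have hint : ∀ a b : ℝ, IntervalIntegrable (fun x : ℝ => √(1 - x ^ 2)) volume a b :=
    fun a b => (by fun_prop : Continuous fun x : ℝ => √(1 - x ^ 2)).intervalIntegrable a b
  have heven : ∫ x in (-1 : ℝ)..0, √(1 - x ^ 2) = ∫ x in (0 : ℝ)..1, √(1 - x ^ 2) := by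
    have := integral_comp_neg (a := 0) (b := 1) fun x : ℝ => √(1 - x ^ 2)
    simpa using this.symm
  have := integral_sqrt_one_sub_sq
  rw [← integral_add_adjacent_intervals (hint (-1) 0) (hint 0 1), heven] at this
  linarith

theorem integral_sqrt_sq_sub_sq {R : ℝ} (hR : 0 < R) :
    ∫ x in (0 : ℝ)..R, √(R ^ 2 - x ^ 2) = π / 4 * R ^ 2 := by
  have hscale : ∀ x : ℝ, √(R ^ 2 - (R * x) ^ 2) = R * √(1 - x ^ 2) := fun x => by
    rw [show R ^ 2 - (R * x) ^ 2 = R ^ 2 * (1 - x ^ 2) by ring, sqrt_mul (sq_nonneg R),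
      sqrt_sq hR.le]
  have := integral_comp_mul_left (a := 0) (b := 1) (fun x => √(R ^ 2 - x ^ 2)) hR.ne'
  simp only [hscale, intervalIntegral.integral_const_mul, integral_sqrt_one_sub_sq_zero_one,
    mul_zero, mul_one, smul_eq_mul] at this
  rw [eq_inv_mul_iff_mul_eq₀ hR.ne'] at this
  linear_combination -this

def quarterDisc (c : ℝ) : Set (ℝ × ℝ) := {q | q.1 ^ 2 + q.2 ^ 2 < c ∧ 0 < q.1 ∧ 0 < q.2}

theorem quarterDisc_eq_regionBetween (c : ℝ) :
    quarterDisc c = regionBetween (fun _ => 0) (fun x => √(c - x ^ 2)) (Ioc 0 √c) := by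
  ext ⟨x, y⟩
  simp only [quarterDisc, regionBetween, mem_ofPred_eq, mem_Ioc, mem_Ioo]
  constructor
  · rintro ⟨hc, hx, hy⟩
    exact ⟨⟨hx, le_sqrt_of_sq_le (by nlinarith)⟩, hy, (lt_sqrt hy.le).2 (by linarith)⟩
  · rintro ⟨⟨hx, -⟩, hy, hyc⟩
    exact ⟨by linarith [(lt_sqrt hy.le).1 hyc], hx, hy⟩

theorem volume_quarterDisc (c : ℝ) : volume (quarterDisc c) = ENNReal.ofReal (π / 4 * c) := by
  rcases le_or_gt c 0 with hc | hc
  · have hempty : quarterDisc c = ∅ := by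
      ext q
      simp only [quarterDisc, mem_ofPred_eq, mem_empty_iff_false, iff_false]
      rintro ⟨hq, -⟩
      nlinarith
    rw [hempty, measure_empty, ENNReal.ofReal_of_nonpos (by nlinarith [pi_pos])]
  have hcont : Continuous fun x : ℝ => √(c - x ^ 2) := by fun_prop
  rw [quarterDisc_eq_regionBetween, Measure.volume_eq_prod,
    volume_regionBetween_eq_integral integrableOn_zero (hcont.integrableOn_Icc.mono_set
      Ioc_subset_Icc_self) measurableSet_Ioc (fun x _ => sqrt_nonneg _)]
  have hint := integral_sqrt_sq_sub_sq (sqrt_pos.2 hc)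
  rw [sq_sqrt hc.le] at hint
  simp only [Pi.sub_apply, sub_zero]
  rw [← integral_of_le (sqrt_nonneg c), hint]

def octantBall (r : ℝ) : Set (ℝ × ℝ × ℝ) :=
  {p | p.1 ^ 2 + p.2.1 ^ 2 + p.2.2 ^ 2 < r ∧ 0 < p.1 ∧ 0 < p.2.1 ∧ 0 < p.2.2}

theorem measurableSet_octantBall (r : ℝ) : MeasurableSet (octantBall r) := by
  simp only [octantBall, ofPred_and]
  refine (measurableSet_lt ?_ ?_).inter ((measurableSet_lt ?_ ?_).inter
    ((measurableSet_lt ?_ ?_).inter (measurableSet_lt ?_ ?_))) <;> fun_prop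

theorem integral_mul_sub_sq (c r b : ℝ) :
    ∫ x in (0 : ℝ)..b, c * (r - x ^ 2) = c * (r * b - b ^ 3 / 3) := by
  rw [intervalIntegral.integral_const_mul, intervalIntegral.integral_sub intervalIntegrable_const
    (intervalIntegrable_pow 2), integral_pow, intervalIntegral.integral_const]
  simp only [smul_eq_mul]
  ring

theorem volume_restrict_octantBall_fst_le {r b : ℝ} (hb : 0 ≤ b) (hbr : b ^ 2 ≤ r) :
    volume.restrict (octantBall r) {p | p.1 ≤ b} =
      ENNReal.ofReal (π / 4 * (r * b - b ^ 3 / 3)) := by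
  have hmeas : MeasurableSet ({p : ℝ × ℝ × ℝ | p.1 ≤ b} ∩ octantBall r) :=
    (measurable_fst measurableSet_Iic).inter (measurableSet_octantBall r)
  have hslice : ∀ x : ℝ, volume (Prod.mk x ⁻¹' ({p | p.1 ≤ b} ∩ octantBall r)) =
      (Ioc 0 b).indicator (fun x => ENNReal.ofReal (π / 4 * (r - x ^ 2))) x := by
    intro x
    by_cases hx : x ∈ Ioc 0 b
    · rw [indicator_of_mem hx, ← volume_quarterDisc]
      congr 1
      ext ⟨y, z⟩
      simp only [octantBall, quarterDisc, mem_preimage, mem_inter_iff, mem_ofPred_eq]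
      constructor
      · rintro ⟨-, h, -, hy, hz⟩
        exact ⟨by linarith, hy, hz⟩
      · rintro ⟨h, hy, hz⟩
        exact ⟨hx.2, by linarith, hx.1, hy, hz⟩
    · have hempty : Prod.mk x ⁻¹' ({p | p.1 ≤ b} ∩ octantBall r) = ∅ := by
        ext ⟨y, z⟩
        simp only [octantBall, mem_preimage, mem_inter_iff, mem_ofPred_eq, mem_empty_iff_false,
          iff_false]
        rintro ⟨hxb, -, hx0, -⟩
        exact hx ⟨hx0, hxb⟩
      rw [indicator_of_notMem hx, hempty, measure_empty]
  have hnonneg : ∀ x ∈ Ioc 0 b, 0 ≤ π / 4 * (r - x ^ 2) := fun x hx => by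
    have : x ^ 2 ≤ b ^ 2 := pow_le_pow_left₀ hx.1.le hx.2 2
    nlinarith [pi_pos]
  rw [Measure.restrict_apply' (measurableSet_octantBall r), Measure.volume_eq_prod,
    Measure.prod_apply hmeas, lintegral_congr hslice, lintegral_indicator measurableSet_Ioc,
    ← ofReal_integral_eq_lintegral_ofReal
      ((by fun_prop : Continuous fun x : ℝ => π / 4 * (r - x ^ 2)).integrableOn_Icc.mono_set
        Ioc_subset_Icc_self) ((ae_restrict_iff' measurableSet_Ioc).2 (.of_forall hnonneg)),
    ← integral_of_le hb, integral_mul_sub_sq]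

theorem volume_octantBall {r : ℝ} (hr : 0 ≤ r) :
    volume (octantBall r) = ENNReal.ofReal (π / 6 * r ^ ((3 : ℝ) / 2)) := by
  have hfull : octantBall r ⊆ {p | p.1 ≤ √r} := fun p hp =>
    le_sqrt_of_sq_le (by nlinarith [hp.1])
  have hrpow : r ^ ((3 : ℝ) / 2) = √r ^ 3 := by
    rw [sqrt_eq_rpow, ← rpow_natCast, ← rpow_mul hr]
    norm_num
  rw [← inter_eq_right.2 hfull, ← Measure.restrict_apply' (measurableSet_octantBall r),
    volume_restrict_octantBall_fst_le (sqrt_nonneg r) (sq_sqrt hr).le, hrpow]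
  congr 1
  linear_combination -π / 4 * √r * sq_sqrt hr

instance (r : ℝ) : IsFiniteMeasure (volume.restrict (octantBall r)) := by
  have hmono : octantBall r ⊆ octantBall (max r 0) := fun p hp =>
    ⟨hp.1.trans_le (le_max_left r 0), hp.2⟩
  rw [isFiniteMeasure_restrict, ← lt_top_iff_ne_top]
  calc volume (octantBall r) ≤ volume (octantBall (max r 0)) := measure_mono hmono
    _ < ⊤ := by rw [volume_octantBall (le_max_right r 0)]; exact ENNReal.ofReal_lt_top

theorem volume_preserving_rotate {α β γ : Type*} [MeasureSpace α] [MeasureSpace β]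
    [MeasureSpace γ] [SFinite (volume : Measure α)] [SFinite (volume : Measure β)]
    [SFinite (volume : Measure γ)] :
    MeasurePreserving (fun p : α × β × γ => (p.2.1, p.2.2, p.1)) volume volume :=
  volume_preserving_prodAssoc.comp Measure.measurePreserving_swap

theorem measurePreserving_rotate_restrict_octantBall (r : ℝ) :
    MeasurePreserving (fun p : ℝ × ℝ × ℝ => (p.2.1, p.2.2, p.1))
      (volume.restrict (octantBall r)) (volume.restrict (octantBall r)) := by
  have hinv : (fun p : ℝ × ℝ × ℝ => (p.2.1, p.2.2, p.1)) ⁻¹' octantBall r = octantBall r := by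
    ext p
    simp only [octantBall, mem_preimage, mem_ofPred_eq]
    constructor
    · rintro ⟨h, hy, hz, hx⟩; exact ⟨by linarith, hx, hy, hz⟩
    · rintro ⟨h, hx, hy, hz⟩; exact ⟨by linarith, hy, hz, hx⟩
  simpa only [hinv] using volume_preserving_rotate.restrict_preimage (measurableSet_octantBall r)

section InclusionExclusion

variable {α : Type*} [MeasurableSpace α] {μ : Measure α} [IsFiniteMeasure μ] {s t u : Set α}

theorem measureReal_union_union_add_inter (ht : MeasurableSet t) (hu : MeasurableSet u) :
    μ.real (s ∪ t ∪ u) + (μ.real (s ∩ t) + μ.real (s ∩ u) + μ.real (t ∩ u)) =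
      μ.real s + μ.real t + μ.real u + μ.real (s ∩ t ∩ u) := by
  have hst := measureReal_union_add_inter (μ := μ) (s := s) ht
  have hstu := measureReal_union_add_inter (μ := μ) (s := s ∪ t) hu
  have hsutu := measureReal_union_add_inter (μ := μ) (s := s ∩ u) (ht.inter hu)
  rw [union_inter_distrib_right] at hstu
  rw [show s ∩ u ∩ (t ∩ u) = s ∩ t ∩ u by ext; simp only [mem_inter_iff]; tauto] at hsutu
  linarith

theorem measureReal_union_union_of_cyclic {f : α → α} (hf : MeasurePreserving f μ μ)
    (hs : MeasurableSet s) (ht : MeasurableSet t) (hu : MeasurableSet u)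
    (hst : f ⁻¹' s = t) (htu : f ⁻¹' t = u) (hus : f ⁻¹' u = s) :
    μ.real (s ∪ t ∪ u) = 3 * μ.real s - 3 * μ.real (s ∩ t) + μ.real (s ∩ t ∩ u) := by
  have hpreim : ∀ v, MeasurableSet v → μ.real (f ⁻¹' v) = μ.real v := fun v hv =>
    hf.measureReal_preimage hv.nullMeasurableSet
  have ht' : μ.real t = μ.real s := hst ▸ hpreim s hs
  have hu' : μ.real u = μ.real t := htu ▸ hpreim t ht
  have htu' : μ.real (t ∩ u) = μ.real (s ∩ t) := by
    rw [← hpreim _ (hs.inter ht), preimage_inter, hst, htu]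
  have hsu' : μ.real (s ∩ u) = μ.real (t ∩ u) := by
    rw [inter_comm, ← hpreim _ (ht.inter hu), preimage_inter, htu, hus]
  linarith [measureReal_union_union_add_inter (μ := μ) (s := s) ht hu]

end InclusionExclusion

theorem sqrt_sub_two_le_measureReal_restrict_octantBall (r : ℝ) :
    √(r - 2) ≤ (volume.restrict (octantBall r)).real ({p | p.1 ≤ 1} ∩ {p | p.2.1 ≤ 1}) := by
  set box : Set (ℝ × ℝ × ℝ) := Ioc 0 1 ×ˢ Ioc 0 1 ×ˢ Ioo 0 √(r - 2)
  have hbox : box ⊆ octantBall r := by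
    rintro ⟨x, y, z⟩ ⟨⟨hx0, hx1⟩, ⟨hy0, hy1⟩, hz0, hz⟩
    have : z ^ 2 < r - 2 := (lt_sqrt hz0.le).1 hz
    exact ⟨by nlinarith, hx0, hy0, hz0⟩
  calc √(r - 2) = volume.real box := by
        simp [box, measureReal_def, Measure.volume_eq_prod, Measure.prod_prod]
    _ = (volume.restrict (octantBall r)).real box := by
        rw [measureReal_def, measureReal_def, Measure.restrict_eq_self _ hbox]
    _ ≤ _ := measureReal_mono fun _ hp => mem_inter hp.1.2 hp.2.1.2

theorem measureReal_restrict_octantBall_inter_inter_le_one (r : ℝ) :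
    (volume.restrict (octantBall r)).real
      ({p | p.1 ≤ 1} ∩ {p | p.2.1 ≤ 1} ∩ {p | p.2.2 ≤ 1}) ≤ 1 := by
  have hcube : ({p : ℝ × ℝ × ℝ | p.1 ≤ 1} ∩ {p | p.2.1 ≤ 1} ∩ {p | p.2.2 ≤ 1}) ∩ octantBall r ⊆
      Ioc 0 1 ×ˢ Ioc 0 1 ×ˢ Ioc 0 1 := by
    rintro p ⟨⟨⟨hx, hy⟩, hz⟩, -, hx0, hy0, hz0⟩
    exact ⟨⟨hx0, hx⟩, ⟨hy0, hy⟩, hz0, hz⟩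
  refine ENNReal.toReal_le_of_le_ofReal zero_le_one ?_
  rw [Measure.restrict_apply' (measurableSet_octantBall r), ENNReal.ofReal_one]
  calc _ ≤ volume (Ioc (0 : ℝ) 1 ×ˢ Ioc (0 : ℝ) 1 ×ˢ Ioc (0 : ℝ) 1) := measure_mono hcube
    _ = 1 := by simp [Measure.volume_eq_prod, Measure.prod_prod]

theorem setOf_one_lt_eq_compl_inter_octantBall (r : ℝ) :
    {p : ℝ × ℝ × ℝ | p.1 ^ 2 + p.2.1 ^ 2 + p.2.2 ^ 2 < r ∧ 1 < p.1 ∧ 1 < p.2.1 ∧ 1 < p.2.2} =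
      ({p | p.1 ≤ 1} ∪ {p | p.2.1 ≤ 1} ∪ {p | p.2.2 ≤ 1})ᶜ ∩ octantBall r := by
  ext p
  simp only [octantBall, mem_inter_iff, mem_compl_iff, mem_union, mem_ofPred_eq, not_or, not_le]
  constructor
  · rintro ⟨h, hx, hy, hz⟩
    exact ⟨⟨⟨hx, hy⟩, hz⟩, h, by linarith, by linarith, by linarith⟩
  · rintro ⟨⟨⟨hx, hy⟩, hz⟩, h, -⟩
    exact ⟨h, hx, hy, hz⟩

theorem volume_corner_region_lower_bound (lam : ℝ) (hlam : 3 ≤ lam) :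
    (volume {p : ℝ × ℝ × ℝ | p.1^2 + p.2.1^2 + p.2.2^2 < lam ∧
        1 < p.1 ∧ 1 < p.2.1 ∧ 1 < p.2.2}).toReal
      > π / 6 * lam ^ ((3 : ℝ) / 2) - 3 * π / 4 * lam + 3 * Real.sqrt (lam - 2) - 1 := by
  have hslab : (volume.restrict (octantBall lam)).real {p | p.1 ≤ 1} = π / 4 * lam - π / 12 := by
    rw [measureReal_def, volume_restrict_octantBall_fst_le zero_le_one (by linarith),
      ENNReal.toReal_ofReal (by nlinarith [pi_pos])]
    ring
  have hball : volume.real (octantBall lam) = π / 6 * lam ^ ((3 : ℝ) / 2) := by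
    rw [measureReal_def, volume_octantBall (by linarith), ENNReal.toReal_ofReal (by positivity)]
  have hH₁ : MeasurableSet {p : ℝ × ℝ × ℝ | p.1 ≤ 1} := measurable_fst measurableSet_Iic
  have hH₂ : MeasurableSet {p : ℝ × ℝ × ℝ | p.2.1 ≤ 1} := measurable_snd.fst measurableSet_Iic
  have hH₃ : MeasurableSet {p : ℝ × ℝ × ℝ | p.2.2 ≤ 1} := measurable_snd.snd measurableSet_Iic
  rw [gt_iff_lt, ← measureReal_def, setOf_one_lt_eq_compl_inter_octantBall,
    ← measureReal_restrict_apply ((hH₁.union hH₂).union hH₃).compl, measureReal_compl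
      ((hH₁.union hH₂).union hH₃), measureReal_union_union_of_cyclic
      (measurePreserving_rotate_restrict_octantBall lam) hH₁ hH₂ hH₃ rfl rfl rfl,
    measureReal_restrict_apply_univ, hball, hslab]
  linarith [sqrt_sub_two_le_measureReal_restrict_octantBall lam,
    measureReal_restrict_octantBall_inter_inter_le_one lam, pi_pos]
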